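/- arXiv:1401.5978 — 2 statements merged into one kernel-verified Lean document; each statement's English description precedes it below -/
import Mathlib

section
/- Let n be a nonnegative integer. Then the little q-Legendre polynomial P_n(x|q) = ∑_{k=0}^{n} qbinom(n,k) qbinom(n+k,k) q^{k(k+1)/2 - nk} (-x)^k satisfies the identity P_n(x|q) = ∑_{k=0}^{n} qbinom(n,k)^2 q^{k(k+1)/2 - nk} (-x)^k (xq;q)_{n-k}, as an identity of polynomials in x over the field of rational functions in q. -/
open Polynomial Finset

/-- The variable `q` as an element of the field of rational functions over `ℚ`. -/
noncomputable def q : RatFunc ℚ := RatFunc.X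

/-- The q-shifted factorial `(a; Q)_n = (1-a)(1-aQ)⋯(1-aQ^{n-1})`. -/
noncomputable def qPoch (a Q : RatFunc ℚ) (n : ℕ) : RatFunc ℚ :=
  ∏ i ∈ Finset.range n, (1 - a * Q ^ i)

/-- The q-integer `[p] = 1 + q + ⋯ + q^{p-1}`. -/
noncomputable def qInt (p : ℕ) : RatFunc ℚ := ∑ i ∈ Finset.range p, q ^ i

/-- The Gaussian binomial coefficient in base `Q`. -/
noncomputable def qBinom (n k : ℕ) (Q : RatFunc ℚ) : RatFunc ℚ :=
  qPoch (Q ^ (n - k + 1)) Q k / qPoch Q Q k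

/-- `ModQ r p A B` : the difference `A - B` lies in the ideal generated by `[p]^r`
in the localization of `ℚ[q]` at the irreducible polynomial `[p]`;
concretely `(A - B) * b = [p]^r * a` for polynomials `a b` with `[p] ∤ b`. -/
def ModQ (r p : ℕ) (A B : RatFunc ℚ) : Prop :=
  ∃ a b : Polynomial ℚ, ¬ ((∑ i ∈ Finset.range p, Polynomial.X ^ i) ∣ b) ∧
    (A - B) * algebraMap (Polynomial ℚ) (RatFunc ℚ) b =
      qInt p ^ r * algebraMap (Polynomial ℚ) (RatFunc ℚ) a

/-!
Compare coefficients of `x^m`. Expanding `(xq;q)_{n-k}` by the finite q-binomial theorem, the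
right-hand side contributes `∑_{k≤m} [n,k]² [n-k,m-k] q^{T(k)-nk+T(m-k)} (-1)^m` with
`T(j) = j(j+1)/2`. The trinomial revision `[n,k][n-k,m-k] = [n,m][m,k]` and
`T(k) - nk + T(m-k) = T(m) - nm + (n-k)(m-k)` turn this into
`[n,m] q^{T(m)-nm} (-1)^m ∑_k [n,k][m,k] q^{(n-k)(m-k)}`, and the last sum is `[n+m,m]` by
q-Vandermonde, i.e. by comparing coefficients in
`∏_{i<n+m} (1 + q^i x) = ∏_{i<n} (1 + q^i x) · ∏_{i<m} (1 + q^{n+i} x)`.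
-/

lemma Polynomial.coeff_mul_one_add_C_mul_X_succ {R : Type*} [CommSemiring R] (p : R[X]) (b : R)
    (j : ℕ) : (p * (1 + C b * X)).coeff (j + 1) = p.coeff (j + 1) + b * p.coeff j := by
  rw [mul_add, mul_one, coeff_add, mul_comm (C b), ← mul_assoc, coeff_mul_C, coeff_mul_X, mul_comm]

lemma Polynomial.C_mul_neg_X_pow {R : Type*} [CommRing R] (c : R) (k : ℕ) :
    C c * (-X) ^ k = C (c * (-1) ^ k) * X ^ k := by
  rw [neg_pow, map_mul, map_pow, map_neg, map_one]
  ring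

section GaussianBinomial

variable {K : Type*} [Field K] {Q : K}

noncomputable def qFact (Q : K) (n : ℕ) : K := ∏ i ∈ range n, (1 - Q ^ (i + 1))

lemma qFact_zero (Q : K) : qFact Q 0 = 1 := prod_range_zero _

lemma qFact_succ (Q : K) (n : ℕ) : qFact Q (n + 1) = qFact Q n * (1 - Q ^ (n + 1)) :=
  prod_range_succ _ _

lemma qFact_ne_zero (hQ : ∀ i, Q ^ (i + 1) ≠ 1) (n : ℕ) : qFact Q n ≠ 0 :=
  prod_ne_zero_iff.2 fun i _ => sub_ne_zero.2 (hQ i).symm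

noncomputable def gaussBinom (Q : K) (n k : ℕ) : K :=
  if k ≤ n then qFact Q n / (qFact Q k * qFact Q (n - k)) else 0

lemma gaussBinom_of_lt {n k : ℕ} (h : n < k) : gaussBinom Q n k = 0 := if_neg h.not_ge

lemma gaussBinom_zero_right (hQ : ∀ i, Q ^ (i + 1) ≠ 1) (n : ℕ) : gaussBinom Q n 0 = 1 := by
  simp [gaussBinom, qFact_zero, qFact_ne_zero hQ]

lemma gaussBinom_self (hQ : ∀ i, Q ^ (i + 1) ≠ 1) (n : ℕ) : gaussBinom Q n n = 1 := by
  simp [gaussBinom, qFact_zero, qFact_ne_zero hQ]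

lemma gaussBinom_sub_right {n k : ℕ} (h : k ≤ n) : gaussBinom Q n (n - k) = gaussBinom Q n k := by
  simp only [gaussBinom, if_pos h, if_pos (n.sub_le k), Nat.sub_sub_self h, mul_comm]

lemma gaussBinom_succ_succ (hQ : ∀ i, Q ^ (i + 1) ≠ 1) (n k : ℕ) :
    gaussBinom Q (n + 1) (k + 1) = gaussBinom Q n (k + 1) + Q ^ (n - k) * gaussBinom Q n k := by
  rcases lt_trichotomy k n with h | rfl | h
  · obtain ⟨j, rfl⟩ := Nat.exists_eq_add_of_lt h
    have e₁ : k + j + 1 + 1 - (k + 1) = j + 1 := by omega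
    have e₂ : k + j + 1 - (k + 1) = j := by omega
    have e₃ : k + j + 1 - k = j + 1 := by omega
    simp only [gaussBinom, if_pos (by omega : k + 1 ≤ k + j + 1 + 1),
      if_pos (by omega : k + 1 ≤ k + j + 1), if_pos (by omega : k ≤ k + j + 1), e₁, e₂, e₃,
      qFact_succ]
    have := qFact_ne_zero hQ
    have hk := sub_ne_zero.2 (hQ k).symm
    have hj := sub_ne_zero.2 (hQ j).symm
    field_simp [this k, this j, this (k + j + 1)]
    ring
  · simp [gaussBinom_self hQ, gaussBinom_of_lt]
  · simp [gaussBinom_of_lt, h, Nat.lt_succ_of_lt h]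

lemma gaussBinom_mul_gaussBinom (hQ : ∀ i, Q ^ (i + 1) ≠ 1) {n m k : ℕ} (hkm : k ≤ m)
    (hmn : m ≤ n) :
    gaussBinom Q n k * gaussBinom Q (n - k) (m - k) = gaussBinom Q n m * gaussBinom Q m k := by
  have e : n - k - (m - k) = n - m := by omega
  simp only [gaussBinom, if_pos (hkm.trans hmn), if_pos (Nat.sub_le_sub_right hmn k), if_pos hmn,
    if_pos hkm, e]
  have := qFact_ne_zero hQ
  field_simp [this k, this (m - k), this (n - m), this (n - k), this m]

/-- The finite q-binomial theorem. -/
theorem coeff_prod_one_add_C_mul_X (hQ : ∀ i, Q ^ (i + 1) ≠ 1) (a : K) (m k : ℕ) :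
    (∏ i ∈ range m, (1 + C (a * Q ^ i) * X)).coeff k =
      gaussBinom Q m k * a ^ k * Q ^ k.choose 2 := by
  induction m generalizing k with
  | zero => cases k <;> simp [gaussBinom_zero_right hQ, gaussBinom_of_lt, coeff_one]
  | succ m ih =>
    rw [prod_range_succ]
    cases k with
    | zero => simp [mul_coeff_zero, ih, gaussBinom_zero_right hQ, -map_mul, -map_pow]
    | succ j =>
      rw [coeff_mul_one_add_C_mul_X_succ, ih, ih, gaussBinom_succ_succ hQ,
        Nat.choose_succ_succ', Nat.choose_one_right]
      rcases le_or_gt j m with h | h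
      · rw [← pow_sub_mul_pow Q h]
        ring
      · simp [gaussBinom_of_lt h]

lemma coeff_prod_one_sub_C_pow_succ_mul_X (hQ : ∀ i, Q ^ (i + 1) ≠ 1) (N j : ℕ) :
    (∏ i ∈ range N, (1 - C (Q ^ (i + 1)) * X)).coeff j =
      (-1) ^ j * gaussBinom Q N j * Q ^ (j + 1).choose 2 := by
  have h : ∏ i ∈ range N, (1 - C (Q ^ (i + 1)) * X) = ∏ i ∈ range N, (1 + C (-Q * Q ^ i) * X) :=
    prod_congr rfl fun i _ => by rw [neg_mul, ← pow_succ', map_neg, neg_mul, sub_eq_add_neg]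
  rw [h, coeff_prod_one_add_C_mul_X hQ, Nat.choose_succ_succ', Nat.choose_one_right, neg_pow,
    pow_add]
  ring

/-- The q-Vandermonde identity. -/
theorem sum_gaussBinom_mul_gaussBinom (hQ : ∀ i, Q ^ (i + 1) ≠ 1) (hQ₀ : Q ≠ 0) {m n : ℕ}
    (h : m ≤ n) :
    ∑ k ∈ range (m + 1), gaussBinom Q n k * gaussBinom Q m k * Q ^ ((n - k) * (m - k)) =
      gaussBinom Q (n + m) m := by
  have hsplit : ∏ i ∈ range (n + m), (1 + C (1 * Q ^ i) * X) =
      (∏ i ∈ range n, (1 + C (1 * Q ^ i) * X)) * ∏ i ∈ range m, (1 + C (Q ^ n * Q ^ i) * X) := by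
    simp [prod_range_add, pow_add]
  have hcoeff := congrArg (coeff · m) hsplit
  simp only [coeff_mul, Nat.sum_antidiagonal_eq_sum_range_succ_mk, coeff_prod_one_add_C_mul_X hQ,
    one_pow, mul_one] at hcoeff
  refine mul_right_cancel₀ (pow_ne_zero (m.choose 2) hQ₀) ?_
  rw [hcoeff, sum_mul]
  refine sum_congr rfl fun k hk => ?_
  have hkm : k ≤ m := Nat.lt_succ_iff.mp (mem_range.mp hk)
  have hexp : k.choose 2 + (n * (m - k) + (m - k).choose 2) = (n - k) * (m - k) + m.choose 2 := by
    apply Nat.cast_injective (R := ℚ)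
    push_cast [Nat.cast_choose_two, Nat.cast_sub hkm, Nat.cast_sub (hkm.trans h)]
    ring
  have hpow : Q ^ ((n - k) * (m - k)) * Q ^ m.choose 2 =
      Q ^ k.choose 2 * (Q ^ (n * (m - k)) * Q ^ (m - k).choose 2) := by
    rw [← pow_add, ← pow_add, ← pow_add, hexp]
  rw [gaussBinom_sub_right hkm, ← pow_mul]
  linear_combination (gaussBinom Q n k * gaussBinom Q m k) * hpow

end GaussianBinomial

lemma q_ne_zero : q ≠ 0 := RatFunc.X_ne_zero

lemma q_pow_succ_ne_one (i : ℕ) : q ^ (i + 1) ≠ 1 := by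
  rw [q, ← RatFunc.algebraMap_X, ← map_pow, ← map_one (algebraMap ℚ[X] (RatFunc ℚ)),
    (RatFunc.algebraMap_injective ℚ).ne_iff]
  exact fun h => by simpa using congrArg natDegree h

lemma qBinom_eq_gaussBinom {Q : RatFunc ℚ} (hQ : ∀ i, Q ^ (i + 1) ≠ 1) {n k : ℕ} (h : k ≤ n) :
    qBinom n k Q = gaussBinom Q n k := by
  have hsplit : qFact Q n = qFact Q (n - k) * qPoch (Q ^ (n - k + 1)) Q k := by
    rw [qFact, qPoch, ← Nat.sub_add_cancel h, prod_range_add, Nat.sub_add_cancel h]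
    congr 1
    exact prod_congr rfl fun i _ => by rw [← pow_add, add_right_comm]
  have hden : qPoch Q Q k = qFact Q k := prod_congr rfl fun i _ => by rw [pow_succ']
  have hnum : qPoch (Q ^ (n - k + 1)) Q k ≠ 0 :=
    right_ne_zero_of_mul (hsplit ▸ qFact_ne_zero hQ n)
  rw [qBinom, gaussBinom, if_pos h, hden, hsplit]
  have := qFact_ne_zero hQ
  field_simp [this k, this (n - k)]

lemma legendre_exponent_add {n m k : ℕ} (hkm : k ≤ m) (hmn : m ≤ n) :
    ((k * (k + 1) / 2 : ℕ) - (n : ℤ) * k) + ((m - k + 1).choose 2 : ℕ) =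
      ((m * (m + 1) / 2 : ℕ) - (n : ℤ) * m) + ((n - k) * (m - k) : ℕ) := by
  have htri (j : ℕ) : j * (j + 1) / 2 = (j + 1).choose 2 := by
    rw [Nat.choose_two_right, Nat.add_sub_cancel, mul_comm]
  rw [htri, htri]
  apply Int.cast_injective (α := ℚ)
  push_cast [Nat.cast_choose_two, Nat.cast_sub hkm, Nat.cast_sub (hkm.trans hmn)]
  ring

lemma sum_legendre_coeff {n m : ℕ} (hmn : m ≤ n) :
    ∑ k ∈ range (m + 1), gaussBinom q n k ^ 2 * q ^ ((k * (k + 1) / 2 : ℕ) - (n : ℤ) * k) *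
        (-1) ^ k * ((-1) ^ (m - k) * gaussBinom q (n - k) (m - k) * q ^ (m - k + 1).choose 2) =
      gaussBinom q n m * gaussBinom q (n + m) m * q ^ ((m * (m + 1) / 2 : ℕ) - (n : ℤ) * m) *
        (-1) ^ m := by
  rw [← sum_gaussBinom_mul_gaussBinom q_pow_succ_ne_one q_ne_zero hmn, mul_sum, sum_mul, sum_mul]
  refine sum_congr rfl fun k hk => ?_
  have hkm : k ≤ m := Nat.lt_succ_iff.mp (mem_range.mp hk)
  have hsign : (-1 : RatFunc ℚ) ^ k * (-1) ^ (m - k) = (-1) ^ m := by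
    rw [← pow_add, Nat.add_sub_cancel' hkm]
  have hpow := congrArg (q ^ ·) (legendre_exponent_add hkm hmn)
  simp only [zpow_add₀ q_ne_zero, zpow_natCast] at hpow
  have hbinom := gaussBinom_mul_gaussBinom q_pow_succ_ne_one hkm hmn
  set G := gaussBinom q n k
  set B := gaussBinom q (n - k) (m - k)
  set P := q ^ ((m * (m + 1) / 2 : ℕ) - (n : ℤ) * m) * q ^ ((n - k) * (m - k))
  linear_combination (G * P * (-1) ^ m) * hbinom + (G ^ 2 * B * (-1) ^ k * (-1) ^ (m - k)) * hpow +
    (G ^ 2 * B * P) * hsign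

/-- New expansion of the little q-Legendre polynomial:
`∑_{k≤n} qbinom(n,k) qbinom(n+k,k) q^{k(k+1)/2-nk} (-x)^k
 = ∑_{k≤n} qbinom(n,k)² q^{k(k+1)/2-nk} (-x)^k (xq;q)_{n-k}`. -/
theorem little_q_legendre_expansion (n : ℕ) :
    (∑ k ∈ Finset.range (n + 1),
        Polynomial.C (qBinom n k q * qBinom (n + k) k q *
            q ^ ((k * (k + 1) / 2 : ℕ) - (n : ℤ) * k)) *
          (-Polynomial.X) ^ k : Polynomial (RatFunc ℚ))
      = ∑ k ∈ Finset.range (n + 1),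
          Polynomial.C (qBinom n k q ^ 2 * q ^ ((k * (k + 1) / 2 : ℕ) - (n : ℤ) * k)) *
            (-Polynomial.X) ^ k *
            ∏ i ∈ Finset.range (n - k),
              (1 - Polynomial.C (q ^ (i + 1)) * Polynomial.X) := by
  ext m
  simp only [finsetSum_coeff, C_mul_neg_X_pow, coeff_C_mul, coeff_X_pow, mul_ite, mul_one, mul_zero,
    sum_ite_eq, mul_assoc (C _), coeff_X_pow_mul', coeff_prod_one_sub_C_pow_succ_mul_X q_pow_succ_ne_one]
  rcases le_or_gt m n with hmn | hnm
  · have hfilter : (range (n + 1)).filter (· ≤ m) = range (m + 1) := by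
      ext k
      simp only [mem_filter, mem_range]
      omega
    rw [if_pos (mem_range.2 (Nat.lt_succ_of_le hmn)), ← sum_filter, hfilter,
      qBinom_eq_gaussBinom q_pow_succ_ne_one hmn,
      qBinom_eq_gaussBinom q_pow_succ_ne_one (Nat.le_add_left m n), ← sum_legendre_coeff hmn]
    refine sum_congr rfl fun k hk => ?_
    rw [qBinom_eq_gaussBinom q_pow_succ_ne_one (by grind)]
  · rw [if_neg (by simpa using hnm), eq_comm]
    refine sum_eq_zero fun k hk => ?_
    rw [gaussBinom_of_lt (by grind), mul_zero, zero_mul, mul_zero, ite_self]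
end

section
/- Let p be an odd prime and m, r positive integers with p not dividing m. Then, coefficientwise in x modulo [p]: ∑_{k=0}^{p-1} (q^r;q^m)_k (q^{m-r};q^m)_k x^k / (q^m;q^m)_k^2 ≡ (-1)^{a} q^{-m·a(a+1)/2} ∑_{k=0}^{p-1} (q^r;q^m)_k (q^{m-r};q^m)_k (x;q^m)_k q^{mk} / (q^m;q^m)_k^2 (mod [p]), where a = ⟨-r/m⟩_p is the least nonnegative residue of -r·m^{-1} modulo p. -/
/-!
Both sides are rational functions whose denominators are prime to `[p] = Φ_p(q)`, so the
congruence modulo `[p]` is an equality after evaluating at a primitive `p`-th root of unity `ζ`.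
There `w = ζ^m` is again primitive, and `p ∣ r + m a` gives `q^r ↦ w^{-a}`,
`q^{m-r} ↦ w^{a+1}`, `q^m ↦ w`. The claim becomes the polynomial identity
`∑ c_k x^k = (-1)^a w^{-a(a+1)/2} ∑ c_k w^k (x; w)_k`,
`c_k = (w^{-a}; w)_k (w^{a+1}; w)_k / (w; w)_k^2`,
which holds for every `w ≠ 0` with `(w; w)_a ≠ 0`: by the q-binomial theorem the coefficient of
`x^j` in `∑ c_k w^k (x; w)_k` is `(-1)^j w^{j(j-1)/2} ∑_k c_k w^k [k, j]_w`, and after the shift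
`k = j + i` this sum is a terminating q-Chu–Vandermonde sum.
-/

open Polynomial Finset

theorem Nat.choose_two_succ (k : ℕ) : (k + 1).choose 2 = k.choose 2 + k := by
  rw [Nat.choose_succ_succ', Nat.choose_one_right, add_comm]

theorem Nat.choose_two_add_succ (j n : ℕ) :
    (j + n + 1).choose 2 = j.choose 2 + j + (j + 1) * n + n.choose 2 := by
  induction n with
  | zero => simp [Nat.choose_two_succ]
  | succ n ih =>
    rw [show j + (n + 1) + 1 = j + n + 1 + 1 by ring, Nat.choose_two_succ, ih, Nat.choose_two_succ]
    ring

theorem Nat.mul_mul_succ_div_two (m a : ℕ) : m * (a * (a + 1)) / 2 = m * (a + 1).choose 2 := by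
  rw [Nat.choose_two_right, Nat.add_sub_cancel, mul_comm (a + 1),
    Nat.mul_div_assoc m (Nat.even_mul_succ_self a).two_dvd]

section CommRing

variable {R : Type*} [CommRing R]

def qPochhammer (b w : R) (n : ℕ) : R := ∏ i ∈ range n, (1 - b * w ^ i)

def qBinomial (w : R) : ℕ → ℕ → R
  | _, 0 => 1
  | 0, _ + 1 => 0
  | n + 1, k + 1 => w ^ (k + 1) * qBinomial w n (k + 1) + qBinomial w n k

variable (b w : R)

@[simp] theorem qPochhammer_zero : qPochhammer b w 0 = 1 := prod_range_zero _

theorem qPochhammer_succ (n : ℕ) :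
    qPochhammer b w (n + 1) = qPochhammer b w n * (1 - b * w ^ n) :=
  prod_range_succ _ _

theorem qPochhammer_succ' (n : ℕ) :
    qPochhammer b w (n + 1) = (1 - b) * qPochhammer (b * w) w n := by
  simp only [qPochhammer, prod_range_succ', pow_succ', pow_zero, mul_one, mul_assoc, mul_comm]

theorem qPochhammer_add (s t : ℕ) :
    qPochhammer b w (s + t) = qPochhammer b w s * qPochhammer (b * w ^ s) w t := by
  simp only [qPochhammer, prod_range_add, pow_add, mul_assoc]

@[simp] theorem qBinomial_zero_right (n : ℕ) : qBinomial w n 0 = 1 := by cases n <;> rfl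

theorem qBinomial_succ_succ (n k : ℕ) :
    qBinomial w (n + 1) (k + 1) = w ^ (k + 1) * qBinomial w n (k + 1) + qBinomial w n k := rfl

theorem qBinomial_eq_zero_of_lt {n k : ℕ} (h : n < k) : qBinomial w n k = 0 := by
  induction n generalizing k with
  | zero => obtain ⟨k, rfl⟩ := Nat.exists_eq_succ_of_ne_zero h.ne'; rfl
  | succ n ih =>
    obtain ⟨k, rfl⟩ := Nat.exists_eq_succ_of_ne_zero (by omega : k ≠ 0)
    rw [qBinomial_succ_succ, ih (by omega), ih (by omega), mul_zero, add_zero]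

@[simp] theorem qBinomial_self (n : ℕ) : qBinomial w n n = 1 := by
  induction n with
  | zero => rfl
  | succ n ih =>
    rw [qBinomial_succ_succ, qBinomial_eq_zero_of_lt w (Nat.lt_succ_self n), ih]
    ring

theorem qBinomial_mul_qPochhammer {n k : ℕ} (h : k ≤ n) :
    qBinomial w n k * qPochhammer w w k * qPochhammer w w (n - k) = qPochhammer w w n := by
  induction n generalizing k with
  | zero =>
    obtain rfl : k = 0 := by omega
    simp
  | succ n ih =>
    rcases k with _ | k
    · simp
    rw [qBinomial_succ_succ, Nat.add_sub_add_right, qPochhammer_succ w w n]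
    rcases Nat.lt_or_ge k n with hk | hk
    · have ih₁ := ih hk.le
      have ih₂ := ih hk
      obtain ⟨d, rfl⟩ : ∃ d, n = k + 1 + d := ⟨n - (k + 1), by omega⟩
      rw [show k + 1 + d - k = d + 1 by omega] at ih₁ ⊢
      rw [show k + 1 + d - (k + 1) = d by omega] at ih₂
      simp only [qPochhammer_succ w w k, qPochhammer_succ w w d] at ih₁ ih₂ ⊢
      linear_combination (w ^ (k + 1) * (1 - w * w ^ d)) * ih₂ + (1 - w * w ^ k) * ih₁
    · obtain rfl : k = n := by omega
      rw [qBinomial_eq_zero_of_lt w (Nat.lt_succ_self k), qBinomial_self, qPochhammer_succ,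
        Nat.sub_self, qPochhammer_zero]
      ring

/-- Rothe's q-binomial theorem. -/
theorem coeff_prod_one_sub_C_mul_X (n j : ℕ) :
    (∏ i ∈ range n, (1 - C (b * w ^ i) * X)).coeff j =
      (-1) ^ j * b ^ j * w ^ j.choose 2 * qBinomial w n j := by
  induction n generalizing b j with
  | zero => rcases j with _ | j <;> simp [coeff_one, qBinomial_eq_zero_of_lt]
  | succ n ih =>
    have hshift : ∀ i, C (b * w ^ (i + 1)) = C (b * w * w ^ i) := fun i => by ring_nf
    rw [prod_range_succ', pow_zero, mul_one]
    simp only [hshift]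
    rcases j with _ | j
    · rw [mul_coeff_zero, ih]
      simp
    · rw [mul_sub, mul_one, coeff_sub, mul_comm (C b), ← mul_assoc, coeff_mul_C, coeff_mul_X,
        ih, ih, qBinomial_succ_succ, Nat.choose_two_succ]
      ring

theorem coeff_prod_one_sub_C_pow_mul_X (n j : ℕ) :
    (∏ i ∈ range n, (1 - C (w ^ i) * X)).coeff j =
      (-1) ^ j * w ^ j.choose 2 * qBinomial w n j := by
  simpa using coeff_prod_one_sub_C_mul_X 1 w n j

end CommRing

section Field

variable {K : Type*} [Field K] {w : K}

def qChuVandermondeTerm (w b c : K) (n i : ℕ) : K :=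
  (-1) ^ i * w ^ (i.choose 2 + i) / w ^ (n * i) * qBinomial w n i * qPochhammer b w i *
    qPochhammer (c * w ^ i) w (n - i)

theorem qChuVandermondeTerm_eq_zero_of_lt (w b c : K) {n i : ℕ} (h : n < i) :
    qChuVandermondeTerm w b c n i = 0 := by
  simp [qChuVandermondeTerm, qBinomial_eq_zero_of_lt w h]

theorem qChuVandermondeTerm_succ_succ (hw : w ≠ 0) (b c : K) {n k : ℕ} (hk : k ≤ n) :
    qChuVandermondeTerm w b c (n + 1) (k + 1) =
      (1 - c * w ^ n) * qChuVandermondeTerm w b c n (k + 1) -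
        (1 - b) / w ^ n * qChuVandermondeTerm w (b * w) (c * w) n k := by
  simp only [qChuVandermondeTerm, qBinomial_succ_succ, qPochhammer_succ' b, Nat.choose_two_succ,
    show c * w * w ^ k = c * w ^ (k + 1) by ring]
  rcases hk.lt_or_eq with hk | rfl
  · obtain ⟨d, rfl⟩ : ∃ d, n = k + 1 + d := ⟨n - (k + 1), by omega⟩
    rw [show k + 1 + d + 1 - (k + 1) = d + 1 by omega, show k + 1 + d - (k + 1) = d by omega,
      show k + 1 + d - k = d + 1 by omega, qPochhammer_succ _ w d]
    field_simp
    ring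
  · rw [qBinomial_eq_zero_of_lt w (Nat.lt_succ_self k), qBinomial_self, Nat.sub_self,
      Nat.sub_self]
    field_simp
    ring

/-- The q-Chu–Vandermonde sum `₂φ₁(w⁻ⁿ, b; c; w, w) = (c/b; w)ₙ bⁿ / (c; w)ₙ`, multiplied
through by `(c; w)ₙ`, with `(w⁻ⁿ; w)ᵢ / (w; w)ᵢ = (-1)ⁱ w^(i(i-1)/2 - n i) [n, i]_w`. -/
theorem sum_qChuVandermondeTerm (hw : w ≠ 0) (b c : K) (n : ℕ) :
    ∑ i ∈ range (n + 1), qChuVandermondeTerm w b c n i = ∏ i ∈ range n, (b - c * w ^ i) := by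
  induction n generalizing b c with
  | zero => simp [qChuVandermondeTerm]
  | succ n ih =>
    have htail : ∑ k ∈ range (n + 1), qChuVandermondeTerm w b c n (k + 1) =
        ∏ i ∈ range n, (b - c * w ^ i) - qChuVandermondeTerm w b c n 0 := by
      have h := sum_range_succ' (qChuVandermondeTerm w b c n) (n + 1)
      rw [sum_range_succ, qChuVandermondeTerm_eq_zero_of_lt w b c (Nat.lt_succ_self n),
        add_zero, ih] at h
      linear_combination -h
    have hhead : qChuVandermondeTerm w b c (n + 1) 0 =
        (1 - c * w ^ n) * qChuVandermondeTerm w b c n 0 := by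
      simp [qChuVandermondeTerm, qPochhammer_succ, mul_comm]
    have hscale : ∏ i ∈ range n, (b * w - c * w * w ^ i) =
        w ^ n * ∏ i ∈ range n, (b - c * w ^ i) := by
      rw [← card_range n, ← prod_const, card_range, ← prod_mul_distrib]
      exact prod_congr rfl fun i _ => by ring
    rw [sum_range_succ', sum_congr rfl fun k hk =>
        qChuVandermondeTerm_succ_succ hw b c (Nat.lt_succ_iff.mp (mem_range.mp hk)),
      sum_sub_distrib, ← mul_sum, ← mul_sum, ih (b * w) (c * w), htail, hhead, hscale,
      prod_range_succ]
    field_simp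
    ring

theorem prod_sub_mul_pow {b : K} (hb : b ≠ 0) (c : K) (n : ℕ) :
    ∏ i ∈ range n, (b - c * w ^ i) = b ^ n * qPochhammer (c / b) w n := by
  rw [qPochhammer, ← card_range n, ← prod_const, card_range, ← prod_mul_distrib]
  exact prod_congr rfl fun i _ => by field_simp

theorem qPochhammer_self_ne_zero_of_le {a k : ℕ} (hpoch : qPochhammer w w a ≠ 0) (h : k ≤ a) :
    qPochhammer w w k ≠ 0 := by
  obtain ⟨d, rfl⟩ := Nat.exists_eq_add_of_le h
  rw [qPochhammer_add] at hpoch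
  exact left_ne_zero_of_mul hpoch

theorem qPochhammer_pow_succ_ne_zero {a s t : ℕ} (hpoch : qPochhammer w w a ≠ 0)
    (h : s + t ≤ a) : qPochhammer (w ^ (s + 1)) w t ≠ 0 := by
  have h := qPochhammer_self_ne_zero_of_le hpoch h
  rw [qPochhammer_add, ← pow_succ'] at h
  exact right_ne_zero_of_mul h

theorem qPochhammer_pow_sub_add_one {n i : ℕ} (hpoch : qPochhammer w w n ≠ 0) (hi : i ≤ n) :
    qPochhammer (w ^ (n - i + 1)) w i = qBinomial w n i * qPochhammer w w i := by
  have hsplit := qPochhammer_add w w (n - i) i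
  rw [Nat.sub_add_cancel hi, ← pow_succ'] at hsplit
  apply mul_left_cancel₀ (qPochhammer_self_ne_zero_of_le hpoch (Nat.sub_le n i))
  rw [← hsplit, ← qBinomial_mul_qPochhammer w hi]
  ring

theorem qBinomial_add_left {j i : ℕ} (hpoch : qPochhammer w w (j + i) ≠ 0) :
    qBinomial w (j + i) j = qPochhammer (w ^ (j + 1)) w i / qPochhammer w w i := by
  have h := qBinomial_mul_qPochhammer w (Nat.le_add_right j i)
  rw [Nat.add_sub_cancel_left, qPochhammer_add, ← pow_succ'] at h
  rw [eq_div_iff (qPochhammer_self_ne_zero_of_le hpoch (Nat.le_add_left i j))]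
  exact mul_left_cancel₀ (qPochhammer_self_ne_zero_of_le hpoch (Nat.le_add_right j i))
    (by linear_combination h)

theorem qPochhammer_inv_pow (hw : w ≠ 0) {n i : ℕ} (hi : i ≤ n) :
    qPochhammer (w ^ n)⁻¹ w i =
      (-1) ^ i * w ^ i.choose 2 * qPochhammer (w ^ (n - i + 1)) w i / w ^ (n * i) := by
  obtain ⟨k, rfl⟩ := Nat.exists_eq_add_of_le' hi
  rw [Nat.add_sub_cancel]
  induction i with
  | zero => simp
  | succ i ih =>
    rw [qPochhammer_succ', qPochhammer_succ,
      show (w ^ (k + (i + 1)))⁻¹ * w = (w ^ (k + i))⁻¹ by field_simp; ring,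
      ih (Nat.le_add_left i k), Nat.choose_two_succ]
    field_simp
    ring

theorem qPochhammer_inv_pow_eq_zero (hw : w ≠ 0) {a k : ℕ} (h : a < k) :
    qPochhammer (w ^ a)⁻¹ w k = 0 :=
  prod_eq_zero (mem_range.mpr h) (by simp [hw])

/-- `∑ₖ qLegendreCoeff w a k * xᵏ` is the little q-Legendre polynomial `pₐ(x/w; w)`. -/
def qLegendreCoeff (w : K) (a k : ℕ) : K :=
  qPochhammer (w ^ a)⁻¹ w k * qPochhammer (w ^ (a + 1)) w k / qPochhammer w w k ^ 2

theorem qLegendreCoeff_eq_zero (hw : w ≠ 0) {a k : ℕ} (h : a < k) :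
    qLegendreCoeff w a k = 0 := by
  simp [qLegendreCoeff, qPochhammer_inv_pow_eq_zero hw h]

theorem qLegendreCoeff_add_mul_qBinomial (hw : w ≠ 0) {j n i : ℕ}
    (hpoch : qPochhammer w w (j + n) ≠ 0) (hi : i ≤ n) :
    qLegendreCoeff w (j + n) (j + i) * w ^ (j + i) * qBinomial w (j + i) j =
      qLegendreCoeff w (j + n) j * w ^ j / qPochhammer (w ^ (j + 1)) w n *
        qChuVandermondeTerm w (w ^ (j + n + j + 1)) (w ^ (j + 1)) n i := by
  have hji : j + i ≤ j + n := by omega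
  have hdown : qPochhammer (w ^ (j + n))⁻¹ w (j + i) = qPochhammer (w ^ (j + n))⁻¹ w j *
      ((-1) ^ i * w ^ i.choose 2 * (qBinomial w n i * qPochhammer w w i) / w ^ (n * i)) := by
    rw [qPochhammer_add, show (w ^ (j + n))⁻¹ * w ^ j = (w ^ n)⁻¹ by field_simp; ring,
      qPochhammer_inv_pow hw hi,
      qPochhammer_pow_sub_add_one (qPochhammer_self_ne_zero_of_le hpoch (Nat.le_add_left n j)) hi]
  have hup : qPochhammer (w ^ (j + n + 1)) w (j + i) =
      qPochhammer (w ^ (j + n + 1)) w j * qPochhammer (w ^ (j + n + j + 1)) w i := by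
    rw [qPochhammer_add, ← pow_add]
    ring_nf
  have hbase : qPochhammer w w (j + i) = qPochhammer w w j * qPochhammer (w ^ (j + 1)) w i := by
    rw [qPochhammer_add, ← pow_succ']
  have htail : qPochhammer (w ^ (j + 1) * w ^ i) w (n - i) =
      qPochhammer (w ^ (j + 1)) w n / qPochhammer (w ^ (j + 1)) w i := by
    rw [eq_div_iff (qPochhammer_pow_succ_ne_zero hpoch hji), mul_comm, ← qPochhammer_add,
      Nat.add_sub_cancel' hi]
  rw [qLegendreCoeff, qLegendreCoeff, qChuVandermondeTerm, hdown, hup, hbase, htail,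
    qBinomial_add_left (qPochhammer_self_ne_zero_of_le hpoch hji)]
  have hPj := qPochhammer_self_ne_zero_of_le hpoch (Nat.le_add_right j n)
  have hPi := qPochhammer_self_ne_zero_of_le hpoch (show i ≤ j + n by omega)
  have hCi := qPochhammer_pow_succ_ne_zero hpoch hji
  have hCn := qPochhammer_pow_succ_ne_zero hpoch (le_refl (j + n))
  field_simp
  ring

/-- Terms with `k > a` vanish; the shift `k = j + i` turns the rest into a q-Chu–Vandermonde sum
with `b = w^(a+j+1)`, `c = w^(j+1)`. -/
theorem sum_qLegendreCoeff_mul_qBinomial (hw : w ≠ 0) {a N : ℕ}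
    (hpoch : qPochhammer w w a ≠ 0) (hN : a < N) (j : ℕ) :
    (-1) ^ j * w ^ j.choose 2 * ∑ k ∈ range N, qLegendreCoeff w a k * w ^ k * qBinomial w k j =
      (-1) ^ a * w ^ (a + 1).choose 2 * qLegendreCoeff w a j := by
  have hvanish : ∀ k, a < k → qLegendreCoeff w a k * w ^ k * qBinomial w k j = 0 :=
    fun k hk => by rw [qLegendreCoeff_eq_zero hw hk, zero_mul, zero_mul]
  rcases lt_or_ge a j with hja | hja
  · rw [qLegendreCoeff_eq_zero hw hja, sum_eq_zero fun k _ => ?_, mul_zero, mul_zero]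
    rcases lt_or_ge a k with hk | hk
    · exact hvanish k hk
    · rw [qBinomial_eq_zero_of_lt w (by omega), mul_zero]
  obtain ⟨n, rfl⟩ := Nat.exists_eq_add_of_le hja
  have hrestrict : ∑ k ∈ range N, qLegendreCoeff w (j + n) k * w ^ k * qBinomial w k j =
      ∑ i ∈ range (n + 1),
        qLegendreCoeff w (j + n) (j + i) * w ^ (j + i) * qBinomial w (j + i) j := by
    rw [← sum_subset (range_subset_range.mpr hN) fun k _ hk => hvanish k (by simpa using hk),
      show (j + n).succ = j + (n + 1) from rfl, sum_range_add, sum_eq_zero fun k hk => by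
        rw [qBinomial_eq_zero_of_lt w (mem_range.mp hk), mul_zero], zero_add]
  have hprod : ∏ i ∈ range n, (w ^ (j + n + j + 1) - w ^ (j + 1) * w ^ i) =
      w ^ ((j + n + j + 1) * n) *
        ((-1) ^ n * w ^ n.choose 2 * qPochhammer (w ^ (j + 1)) w n / w ^ ((j + n) * n)) := by
    rw [prod_sub_mul_pow (pow_ne_zero _ hw), ← pow_mul,
      show w ^ (j + 1) / w ^ (j + n + j + 1) = (w ^ (j + n))⁻¹ by field_simp; ring,
      qPochhammer_inv_pow hw (Nat.le_add_left n j), Nat.add_sub_cancel]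
  rw [hrestrict, sum_congr rfl fun i hi =>
      qLegendreCoeff_add_mul_qBinomial hw hpoch (Nat.lt_succ_iff.mp (mem_range.mp hi)),
    ← mul_sum, sum_qChuVandermondeTerm hw, hprod, Nat.choose_two_add_succ]
  have hCn := qPochhammer_pow_succ_ne_zero hpoch (le_refl (j + n))
  field_simp
  ring

theorem sum_C_qLegendreCoeff_mul_X_pow (hw : w ≠ 0) {a N : ℕ} (hpoch : qPochhammer w w a ≠ 0)
    (hN : a < N) :
    ∑ k ∈ range N, C (qLegendreCoeff w a k) * X ^ k =
      C ((-1) ^ a * (w ^ (a + 1).choose 2)⁻¹) *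
        ∑ k ∈ range N, C (qLegendreCoeff w a k * w ^ k) * ∏ i ∈ range k, (1 - C (w ^ i) * X) := by
  ext j
  have hlhs : ∑ k ∈ range N, qLegendreCoeff w a k * (X ^ k : K[X]).coeff j =
      qLegendreCoeff w a j := by
    simp only [coeff_X_pow, mul_ite, mul_one, mul_zero, sum_ite_eq, mem_range]
    split_ifs with hj
    · rfl
    · exact (qLegendreCoeff_eq_zero hw (by omega)).symm
  have hrhs : ∑ k ∈ range N,
      qLegendreCoeff w a k * w ^ k * ((-1) ^ j * w ^ j.choose 2 * qBinomial w k j) =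
        (-1) ^ a * w ^ (a + 1).choose 2 * qLegendreCoeff w a j := by
    rw [← sum_qLegendreCoeff_mul_qBinomial hw hpoch hN j, mul_sum]
    exact sum_congr rfl fun _ _ => by ring
  simp only [finsetSum_coeff, coeff_C_mul, coeff_prod_one_sub_C_pow_mul_X, hlhs, hrhs]
  have hsign : (-1 : K) ^ a * (-1) ^ a = 1 := by rw [← mul_pow]; simp
  have hinv := inv_mul_cancel₀ (pow_ne_zero ((a + 1).choose 2) hw)
  linear_combination
    (-((w ^ (a + 1).choose 2)⁻¹ * w ^ (a + 1).choose 2 * qLegendreCoeff w a j)) * hsign -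
      qLegendreCoeff w a j * hinv

theorem IsPrimitiveRoot.qPochhammer_self_ne_zero {p k : ℕ} (hw : IsPrimitiveRoot w p)
    (hk : k < p) : qPochhammer w w k ≠ 0 :=
  prod_ne_zero_iff.mpr fun i hi => sub_ne_zero.mpr <| by
    rw [← pow_succ']
    exact (hw.pow_ne_one_of_pos_of_lt i.succ_ne_zero (by simp at hi; omega)).symm

end Field

namespace RatFunc

variable {F K : Type*} [Field F] [Field K] [Algebra F K]

def HasValueAt (A : RatFunc F) (x z : K) : Prop :=
  ∃ f g : F[X], aeval z g ≠ 0 ∧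
    A * algebraMap F[X] (RatFunc F) g = algebraMap F[X] (RatFunc F) f ∧ aeval z f = x * aeval z g

variable {z : K}

theorem hasValueAt_algebraMap (f : F[X]) :
    HasValueAt (algebraMap F[X] (RatFunc F) f) (aeval z f) z :=
  ⟨f, 1, by simp, by simp, by simp⟩

theorem hasValueAt_X : HasValueAt (X : RatFunc F) z z := by
  simpa [algebraMap_X] using hasValueAt_algebraMap (z := z) (Polynomial.X : F[X])

theorem hasValueAt_one : HasValueAt (1 : RatFunc F) (1 : K) z := by
  simpa using hasValueAt_algebraMap (z := z) (1 : F[X])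

theorem hasValueAt_zero : HasValueAt (0 : RatFunc F) (0 : K) z := by
  simpa using hasValueAt_algebraMap (z := z) (0 : F[X])

namespace HasValueAt

variable {A B : RatFunc F} {x y : K}

theorem add (hA : HasValueAt A x z) (hB : HasValueAt B y z) : HasValueAt (A + B) (x + y) z := by
  obtain ⟨f₁, g₁, hg₁, hA, hx⟩ := hA
  obtain ⟨f₂, g₂, hg₂, hB, hy⟩ := hB
  refine ⟨f₁ * g₂ + f₂ * g₁, g₁ * g₂, by simp [hg₁, hg₂], ?_, ?_⟩
  · simp only [map_add, map_mul, ← hA, ← hB]; ring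
  · simp only [map_add, map_mul, hx, hy]; ring

theorem mul (hA : HasValueAt A x z) (hB : HasValueAt B y z) : HasValueAt (A * B) (x * y) z := by
  obtain ⟨f₁, g₁, hg₁, hA, hx⟩ := hA
  obtain ⟨f₂, g₂, hg₂, hB, hy⟩ := hB
  refine ⟨f₁ * f₂, g₁ * g₂, by simp [hg₁, hg₂], ?_, ?_⟩
  · simp only [map_mul, ← hA, ← hB]; ring
  · simp only [map_mul, hx, hy]; ring

theorem neg (hA : HasValueAt A x z) : HasValueAt (-A) (-x) z := by
  obtain ⟨f, g, hg, hA, hx⟩ := hA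
  exact ⟨-f, g, hg, by rw [map_neg, neg_mul, hA], by rw [map_neg, hx, neg_mul]⟩

theorem sub (hA : HasValueAt A x z) (hB : HasValueAt B y z) : HasValueAt (A - B) (x - y) z := by
  simpa only [sub_eq_add_neg] using hA.add hB.neg

theorem pow (hA : HasValueAt A x z) (n : ℕ) : HasValueAt (A ^ n) (x ^ n) z := by
  induction n with
  | zero => simpa using hasValueAt_one
  | succ n ih => simpa only [pow_succ] using ih.mul hA

theorem inv (hA : HasValueAt A x z) (hx : x ≠ 0) : HasValueAt A⁻¹ x⁻¹ z := by
  obtain ⟨f, g, hg, hA', hfx⟩ := hA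
  have hfz : aeval z f ≠ 0 := by rw [hfx]; exact mul_ne_zero hx hg
  have hA0 : A ≠ 0 := by
    rintro rfl
    rw [zero_mul, eq_comm, map_eq_zero_iff _ (algebraMap_injective F)] at hA'
    simp [hA'] at hfz
  refine ⟨g, f, hfz, ?_, ?_⟩
  · rw [← hA', ← mul_assoc, inv_mul_cancel₀ hA0, one_mul]
  · rw [hfx, ← mul_assoc, inv_mul_cancel₀ hx, one_mul]

theorem div (hA : HasValueAt A x z) (hB : HasValueAt B y z) (hy : y ≠ 0) :
    HasValueAt (A / B) (x / y) z := by
  simpa only [div_eq_mul_inv] using hA.mul (hB.inv hy)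

theorem zpow (hA : HasValueAt A x z) (hx : x ≠ 0) (n : ℤ) : HasValueAt (A ^ n) (x ^ n) z := by
  cases n with
  | ofNat n => simpa using hA.pow n
  | negSucc n => simpa only [zpow_negSucc] using (hA.pow (n + 1)).inv (pow_ne_zero _ hx)

end HasValueAt

theorem hasValueAt_sum {ι : Type*} (s : Finset ι) {A : ι → RatFunc F} {x : ι → K}
    (h : ∀ i ∈ s, HasValueAt (A i) (x i) z) : HasValueAt (∑ i ∈ s, A i) (∑ i ∈ s, x i) z := by
  induction s using Finset.cons_induction with
  | empty => simpa using hasValueAt_zero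
  | cons i s _ ih =>
    rw [sum_cons, sum_cons]
    exact (h i (mem_cons_self i s)).add (ih fun k hk => h k (mem_cons_of_mem hk))

theorem hasValueAt_prod {ι : Type*} (s : Finset ι) {A : ι → RatFunc F} {x : ι → K}
    (h : ∀ i ∈ s, HasValueAt (A i) (x i) z) : HasValueAt (∏ i ∈ s, A i) (∏ i ∈ s, x i) z := by
  induction s using Finset.cons_induction with
  | empty => simpa using hasValueAt_one
  | cons i s _ ih =>
    rw [prod_cons, prod_cons]
    exact (h i (mem_cons_self i s)).mul (ih fun k hk => h k (mem_cons_of_mem hk))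

end RatFunc

namespace Polynomial

variable {F K : Type*} [Field F] [Field K] [Algebra F K] {z : K}

def HasCoeffValuesAt (P : (RatFunc F)[X]) (Q : K[X]) (z : K) : Prop :=
  ∀ j, (P.coeff j).HasValueAt (Q.coeff j) z

theorem hasCoeffValuesAt_C {A : RatFunc F} {x : K} (h : A.HasValueAt x z) :
    HasCoeffValuesAt (C A) (C x) z := by
  rintro (_ | j)
  · simpa using h
  · simpa using RatFunc.hasValueAt_zero

theorem hasCoeffValuesAt_one : HasCoeffValuesAt (1 : (RatFunc F)[X]) (1 : K[X]) z := by
  have h := hasCoeffValuesAt_C (F := F) (z := z) RatFunc.hasValueAt_one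
  rwa [C_1, C_1] at h

theorem hasCoeffValuesAt_X : HasCoeffValuesAt (X : (RatFunc F)[X]) (X : K[X]) z := by
  rintro (_ | _ | j)
  · simpa using RatFunc.hasValueAt_zero
  · simpa using RatFunc.hasValueAt_one
  · simpa [coeff_X] using RatFunc.hasValueAt_zero

namespace HasCoeffValuesAt

variable {P P' : (RatFunc F)[X]} {Q Q' : K[X]}

theorem sub (h : HasCoeffValuesAt P Q z) (h' : HasCoeffValuesAt P' Q' z) :
    HasCoeffValuesAt (P - P') (Q - Q') z := fun j => by
  simpa only [coeff_sub] using (h j).sub (h' j)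

theorem mul (h : HasCoeffValuesAt P Q z) (h' : HasCoeffValuesAt P' Q' z) :
    HasCoeffValuesAt (P * P') (Q * Q') z := fun j => by
  simpa only [coeff_mul] using RatFunc.hasValueAt_sum _ fun x _ => (h x.1).mul (h' x.2)

theorem pow (h : HasCoeffValuesAt P Q z) (n : ℕ) : HasCoeffValuesAt (P ^ n) (Q ^ n) z := by
  induction n with
  | zero => simpa only [pow_zero] using hasCoeffValuesAt_one
  | succ n ih => simpa only [pow_succ] using ih.mul h

end HasCoeffValuesAt

theorem hasCoeffValuesAt_sum {ι : Type*} (s : Finset ι) {P : ι → (RatFunc F)[X]}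
    {Q : ι → K[X]} (h : ∀ i ∈ s, HasCoeffValuesAt (P i) (Q i) z) :
    HasCoeffValuesAt (∑ i ∈ s, P i) (∑ i ∈ s, Q i) z := fun j => by
  simpa only [finsetSum_coeff] using RatFunc.hasValueAt_sum s fun i hi => h i hi j

theorem hasCoeffValuesAt_prod {ι : Type*} (s : Finset ι) {P : ι → (RatFunc F)[X]}
    {Q : ι → K[X]} (h : ∀ i ∈ s, HasCoeffValuesAt (P i) (Q i) z) :
    HasCoeffValuesAt (∏ i ∈ s, P i) (∏ i ∈ s, Q i) z := by
  induction s using Finset.cons_induction with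
  | empty => simpa only [prod_empty] using hasCoeffValuesAt_one
  | cons i s _ ih =>
    rw [prod_cons, prod_cons]
    exact (h i (mem_cons_self i s)).mul (ih fun k hk => h k (mem_cons_of_mem hk))

end Polynomial

theorem qInt_eq_algebraMap_cyclotomic (p : ℕ) [Fact p.Prime] :
    qInt p = algebraMap ℚ[X] (RatFunc ℚ) (cyclotomic p ℚ) := by
  simp [qInt, q, cyclotomic_prime, RatFunc.algebraMap_X]

theorem modQ_of_hasValueAt {K : Type*} [Field K] [CharZero K] {p : ℕ} [hp : Fact p.Prime]
    {ζ : K} (hζ : IsPrimitiveRoot ζ p) {A B : RatFunc ℚ} {x : K} (hA : A.HasValueAt x ζ)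
    (hB : B.HasValueAt x ζ) : ModQ 1 p A B := by
  obtain ⟨f₁, g₁, hg₁, hA, hx₁⟩ := hA
  obtain ⟨f₂, g₂, hg₂, hB, hx₂⟩ := hB
  have hmin : ∑ i ∈ range p, (X : ℚ[X]) ^ i = minpoly ℚ ζ := by
    rw [← cyclotomic_prime, cyclotomic_eq_minpoly_rat hζ hp.out.pos]
  obtain ⟨c, hc⟩ : minpoly ℚ ζ ∣ f₁ * g₂ - f₂ * g₁ :=
    minpoly.dvd ℚ ζ (by simp only [map_sub, map_mul, hx₁, hx₂]; ring)
  refine ⟨c, g₁ * g₂, ?_, ?_⟩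
  · rw [hmin]
    rintro ⟨d, hd⟩
    have h := congrArg (aeval ζ) hd
    rw [map_mul, map_mul, minpoly.aeval, zero_mul] at h
    exact mul_ne_zero hg₁ hg₂ h
  · rw [pow_one, qInt_eq_algebraMap_cyclotomic, ← map_mul, cyclotomic_prime, hmin, ← hc, map_sub,
      map_mul, map_mul, map_mul, ← hA, ← hB]
    ring

theorem dvd_add_mul_val_neg_div {p : ℕ} [Fact p.Prime] {m : ℕ} (hpm : ¬ p ∣ m) (r : ℕ) :
    p ∣ r + m * (-(r : ZMod p) / m).val := by
  have hm : (m : ZMod p) ≠ 0 := by rwa [Ne, ZMod.natCast_eq_zero_iff]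
  rw [← ZMod.natCast_eq_zero_iff]
  push_cast
  rw [ZMod.natCast_val, ZMod.cast_id]
  field_simp
  ring

section Specialization

variable {K : Type*} [Field K] [CharZero K] {z : K}

theorem hasValueAt_q_pow (n : ℕ) : (q ^ n).HasValueAt (z ^ n) z := RatFunc.hasValueAt_X.pow n

theorem hasValueAt_qPoch {A Q : RatFunc ℚ} {x y : K} (hA : A.HasValueAt x z)
    (hQ : Q.HasValueAt y z) (n : ℕ) : (qPoch A Q n).HasValueAt (qPochhammer x y n) z :=
  RatFunc.hasValueAt_prod _ fun i _ => RatFunc.hasValueAt_one.sub (hA.mul (hQ.pow i))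

variable {m r a : ℕ}

theorem hasValueAt_qLegendreCoeff (hz : z ≠ 0) (hza : z ^ r * (z ^ m) ^ a = 1) {k : ℕ}
    (hk : qPochhammer (z ^ m) (z ^ m) k ≠ 0) :
    (qPoch (q ^ r) (q ^ m) k * qPoch (q ^ ((m : ℤ) - r)) (q ^ m) k /
      qPoch (q ^ m) (q ^ m) k ^ 2).HasValueAt (qLegendreCoeff (z ^ m) a k) z := by
  have hr : z ^ r = ((z ^ m) ^ a)⁻¹ := eq_inv_of_mul_eq_one_left hza
  have hmr : z ^ ((m : ℤ) - r) = (z ^ m) ^ (a + 1) := by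
    rw [zpow_sub₀ hz, zpow_natCast, zpow_natCast, hr, div_inv_eq_mul, pow_succ']
  have hqm : (q ^ m).HasValueAt (z ^ m) z := hasValueAt_q_pow m
  exact ((hasValueAt_qPoch (hr ▸ hasValueAt_q_pow r) hqm k).mul
    (hasValueAt_qPoch (hmr ▸ RatFunc.hasValueAt_X.zpow hz _) hqm k)).div
    ((hasValueAt_qPoch hqm hqm k).pow 2) (pow_ne_zero 2 hk)

variable {N : ℕ}

theorem hasCoeffValuesAt_sum_qLegendreCoeff_mul_X_pow (hz : z ≠ 0)
    (hza : z ^ r * (z ^ m) ^ a = 1) (hN : ∀ k < N, qPochhammer (z ^ m) (z ^ m) k ≠ 0) :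
    HasCoeffValuesAt
      (∑ k ∈ range N, C (qPoch (q ^ r) (q ^ m) k * qPoch (q ^ ((m : ℤ) - r)) (q ^ m) k /
        qPoch (q ^ m) (q ^ m) k ^ 2) * X ^ k)
      (∑ k ∈ range N, C (qLegendreCoeff (z ^ m) a k) * X ^ k) z :=
  hasCoeffValuesAt_sum _ fun k hk =>
    (hasCoeffValuesAt_C (hasValueAt_qLegendreCoeff hz hza (hN k (mem_range.mp hk)))).mul
      (hasCoeffValuesAt_X.pow k)

theorem hasCoeffValuesAt_sum_qLegendreCoeff_mul_prod (hz : z ≠ 0)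
    (hza : z ^ r * (z ^ m) ^ a = 1) (hN : ∀ k < N, qPochhammer (z ^ m) (z ^ m) k ≠ 0) :
    HasCoeffValuesAt
      (C ((-1 : RatFunc ℚ) ^ a * (q ^ (m * (a * (a + 1)) / 2))⁻¹) *
        ∑ k ∈ range N, C (qPoch (q ^ r) (q ^ m) k * qPoch (q ^ ((m : ℤ) - r)) (q ^ m) k *
          q ^ (m * k) / qPoch (q ^ m) (q ^ m) k ^ 2) * ∏ i ∈ range k, (1 - C ((q ^ m) ^ i) * X))
      (C ((-1) ^ a * ((z ^ m) ^ (a + 1).choose 2)⁻¹) *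
        ∑ k ∈ range N, C (qLegendreCoeff (z ^ m) a k * (z ^ m) ^ k) *
          ∏ i ∈ range k, (1 - C ((z ^ m) ^ i) * X)) z := by
  have hqm : (q ^ m).HasValueAt (z ^ m) z := hasValueAt_q_pow m
  refine (hasCoeffValuesAt_C ?_).mul (hasCoeffValuesAt_sum _ fun k hk => ?_)
  · rw [Nat.mul_mul_succ_div_two, pow_mul]
    exact (RatFunc.hasValueAt_one.neg.pow a).mul
      ((hqm.pow _).inv (pow_ne_zero _ (pow_ne_zero _ hz)))
  · rw [mul_div_right_comm, pow_mul]
    exact (hasCoeffValuesAt_C ((hasValueAt_qLegendreCoeff hz hza (hN k (mem_range.mp hk))).mul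
      (hqm.pow k))).mul (hasCoeffValuesAt_prod _ fun i _ =>
        hasCoeffValuesAt_one.sub ((hasCoeffValuesAt_C (hqm.pow i)).mul hasCoeffValuesAt_X))

end Specialization

theorem q_rv_general_general (p m r : ℕ) [Fact p.Prime] (hpm : ¬ p ∣ m)
    (a : ℕ) (ha : a = ZMod.val (-(r : ZMod p) / (m : ZMod p))) :
    ∀ j : ℕ, ModQ 1 p
      ((∑ k ∈ Finset.range p,
          Polynomial.C (qPoch (q ^ r) (q ^ m) k * qPoch (q ^ ((m : ℤ) - r)) (q ^ m) k /
              qPoch (q ^ m) (q ^ m) k ^ 2) *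
            Polynomial.X ^ k : Polynomial (RatFunc ℚ)).coeff j)
      ((Polynomial.C ((-1 : RatFunc ℚ) ^ a * (q ^ (m * (a * (a + 1)) / 2))⁻¹) *
          ∑ k ∈ Finset.range p,
            Polynomial.C (qPoch (q ^ r) (q ^ m) k * qPoch (q ^ ((m : ℤ) - r)) (q ^ m) k *
                q ^ (m * k) / qPoch (q ^ m) (q ^ m) k ^ 2) *
              ∏ i ∈ Finset.range k,
                (1 - Polynomial.C ((q ^ m) ^ i) * Polynomial.X) :
          Polynomial (RatFunc ℚ)).coeff j) := by
  intro j
  have hp : p.Prime := Fact.out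
  set ζ : ℂ := Complex.exp (2 * Real.pi * Complex.I / p)
  have hζ : IsPrimitiveRoot ζ p := Complex.isPrimitiveRoot_exp p hp.ne_zero
  have hζ0 : ζ ≠ 0 := hζ.ne_zero hp.ne_zero
  have hw : IsPrimitiveRoot (ζ ^ m) p :=
    hζ.pow_of_coprime m ((Nat.Prime.coprime_iff_not_dvd hp).mpr hpm).symm
  have hζa : ζ ^ r * (ζ ^ m) ^ a = 1 := by
    rw [← pow_mul, ← pow_add, hζ.pow_eq_one_iff_dvd, ha]
    exact dvd_add_mul_val_neg_div hpm r
  have hden : ∀ k < p, qPochhammer (ζ ^ m) (ζ ^ m) k ≠ 0 :=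
    fun k hk => hw.qPochhammer_self_ne_zero hk
  have hap : a < p := ha ▸ ZMod.val_lt _
  refine modQ_of_hasValueAt hζ (hasCoeffValuesAt_sum_qLegendreCoeff_mul_X_pow hζ0 hζa hden j) ?_
  rw [sum_C_qLegendreCoeff_mul_X_pow (hw.ne_zero hp.ne_zero) (hden a hap) hap]
  exact hasCoeffValuesAt_sum_qLegendreCoeff_mul_prod hζ0 hζa hden j

/-- Theorem 3.1: coefficientwise in `x` mod `[p]`, with `a = ⟨-r/m⟩_p`,
`∑_{k<p} (q^r;q^m)_k (q^{m-r};q^m)_k x^k / (q^m;q^m)_k²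
 ≡ (-1)^a q^{-m a(a+1)/2} ∑_{k<p} (q^r;q^m)_k (q^{m-r};q^m)_k (x;q^m)_k q^{mk}/(q^m;q^m)_k²`. -/
theorem q_rv_general (p m r : ℕ) [Fact p.Prime] (hodd : Odd p)
    (hm : 0 < m) (hr : 0 < r) (hpm : ¬ p ∣ m)
    (a : ℕ) (ha : a = ZMod.val (-(r : ZMod p) / (m : ZMod p))) :
    ∀ j : ℕ, ModQ 1 p
      ((∑ k ∈ Finset.range p,
          Polynomial.C (qPoch (q ^ r) (q ^ m) k * qPoch (q ^ ((m : ℤ) - r)) (q ^ m) k /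
              qPoch (q ^ m) (q ^ m) k ^ 2) *
            Polynomial.X ^ k : Polynomial (RatFunc ℚ)).coeff j)
      ((Polynomial.C ((-1 : RatFunc ℚ) ^ a * (q ^ (m * (a * (a + 1)) / 2))⁻¹) *
          ∑ k ∈ Finset.range p,
            Polynomial.C (qPoch (q ^ r) (q ^ m) k * qPoch (q ^ ((m : ℤ) - r)) (q ^ m) k *
                q ^ (m * k) / qPoch (q ^ m) (q ^ m) k ^ 2) *
              ∏ i ∈ Finset.range k,
                (1 - Polynomial.C ((q ^ m) ^ i) * Polynomial.X) :
          Polynomial (RatFunc ℚ)).coeff j) :=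
  q_rv_general_general p m r hpm a ha
end
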